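/- arXiv:1803.10590 — 2 statements merged into one kernel-verified Lean document; each statement's English description precedes it below -/
import Mathlib

section
/- Let X have the logistic distribution with mean μ and scale s > 0. Then E[(max(0, X))²] = −2s²·Li₂(−e^{μ/s}), where Li₂(z) = Σ_{k≥1} z^k/k² is the dilogarithm (real-valued for z ∈ [−1, 0]). -/
open MeasureTheory

/-- Pdf of the logistic distribution with location `m` and scale `s`. -/
noncomputable def logisticPdf (m s x : ℝ) : ℝ :=
  Real.exp (-(x - m) / s) / (s * (1 + Real.exp (-(x - m) / s)) ^ 2)

/-- The dilogarithm on the real line, via its integral representation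
Li₂(z) = −∫₀^z log(1−t)/t dt. -/
noncomputable def dilog (z : ℝ) : ℝ := -∫ t in (0 : ℝ)..z, Real.log (1 - t) / t

/-! On `(0, ∞)` the integrand `x² f(x)` has an elementary primitive in terms of
`log (1 + e^{-(x-μ)/s})` and `Li₂(-e^{-(x-μ)/s})`. Since `|Li₂(z)| ≤ |z|` for `z ≤ 0`, each of
its terms is `O(x² e^{-x/s})`, so it vanishes at `+∞`, while its value at `0` is
`2s² Li₂(-e^{μ/s})`; the fundamental theorem of calculus on `(0, ∞)` gives the moment. -/

open Real Set Filter Topology Interval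

lemma abs_log_one_sub_div_le_one {t : ℝ} (ht : t ≤ 0) : |log (1 - t) / t| ≤ 1 := by
  rcases ht.eq_or_lt with rfl | ht
  · simp
  have hlog_nonneg : 0 ≤ log (1 - t) := log_nonneg (by linarith)
  have hlog_le : log (1 - t) ≤ -t := by linarith [log_le_sub_one_of_pos (by linarith : 0 < 1 - t)]
  rwa [abs_div, abs_of_nonneg hlog_nonneg, abs_of_neg ht, div_le_one (by linarith)]

lemma measurable_log_one_sub_div : Measurable fun t : ℝ => log (1 - t) / t := by
  fun_prop

lemma norm_log_one_sub_div_le_one_of_mem_uIoc {z t : ℝ} (hz : z ≤ 0) (ht : t ∈ Ι 0 z) :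
    ‖log (1 - t) / t‖ ≤ 1 := by
  refine abs_log_one_sub_div_le_one ?_
  rcases mem_uIoc.mp ht with h | h
  · linarith [h.2]
  · exact h.2

lemma abs_dilog_le {z : ℝ} (hz : z ≤ 0) : |dilog z| ≤ -z := by
  have h := intervalIntegral.norm_integral_le_of_norm_le_const
    fun t ht => norm_log_one_sub_div_le_one_of_mem_uIoc hz ht
  rwa [one_mul, sub_zero, abs_of_nonpos hz, Real.norm_eq_abs, ← abs_neg] at h

lemma hasDerivAt_dilog {z : ℝ} (hz : z < 0) : HasDerivAt dilog (-(log (1 - z) / z)) z := by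
  have hint : IntervalIntegrable (fun t => log (1 - t) / t) volume 0 z := by
    refine intervalIntegrable_iff.mpr <| Measure.integrableOn_of_bounded (M := 1)
      measure_Ioc_lt_top.ne measurable_log_one_sub_div.aestronglyMeasurable ?_
    exact (ae_restrict_iff' measurableSet_uIoc).mpr <| ae_of_all _ fun t ht =>
      norm_log_one_sub_div_le_one_of_mem_uIoc hz.le ht
  have hcont : ContinuousAt (fun t => log (1 - t) / t) z :=
    ((continuousAt_const.sub continuousAt_id).log (by simp; linarith)).div continuousAt_id hz.ne
  exact (intervalIntegral.integral_hasDerivAt_right hint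
    measurable_log_one_sub_div.stronglyMeasurable.stronglyMeasurableAtFilter hcont).neg

lemma hasDerivAt_dilog_neg_exp (y : ℝ) :
    HasDerivAt (fun y => dilog (-exp y)) (-log (1 + exp y)) y := by
  refine ((hasDerivAt_dilog (neg_lt_zero.mpr (exp_pos y))).comp y
    (hasDerivAt_exp y).neg).congr_deriv ?_
  field_simp
  ring_nf

lemma integral_max_zero_sq_mul (g : ℝ → ℝ) :
    ∫ x, max 0 x ^ 2 * g x = ∫ x in Ioi 0, x ^ 2 * g x := by
  have hvanish : ∀ x ∉ Ioi (0 : ℝ), max 0 x ^ 2 * g x = 0 := fun x hx => by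
    rw [max_eq_left (not_lt.mp hx)]
    ring
  rw [← setIntegral_eq_integral_of_forall_compl_eq_zero hvanish]
  exact setIntegral_congr_fun measurableSet_Ioi fun x hx => by rw [max_eq_right (le_of_lt hx)]

section Logistic

variable {m s : ℝ}

lemma logisticPdf_pos (hs : 0 < s) (x : ℝ) : 0 < logisticPdf m s x := by
  unfold logisticPdf
  positivity

/-- `P(X > x)` for `X` logistic with location `m` and scale `s`. -/
noncomputable def logisticSurvival (m s x : ℝ) : ℝ :=
  exp (-(x - m) / s) / (1 + exp (-(x - m) / s))

lemma logisticSurvival_le_exp (x : ℝ) : logisticSurvival m s x ≤ exp (-(x - m) / s) :=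
  div_le_self (exp_pos _).le (le_add_of_nonneg_right (exp_pos _).le)

lemma hasDerivAt_neg_sub_div (x : ℝ) : HasDerivAt (fun x => -(x - m) / s) (-1 / s) x := by
  simpa using ((hasDerivAt_id x).sub_const m).neg.div_const s

lemma hasDerivAt_exp_neg_sub_div (x : ℝ) :
    HasDerivAt (fun x => exp (-(x - m) / s)) (-(exp (-(x - m) / s) / s)) x :=
  (hasDerivAt_neg_sub_div x).exp.congr_deriv (by ring)

lemma hasDerivAt_logisticSurvival (x : ℝ) :
    HasDerivAt (logisticSurvival m s) (-logisticPdf m s x) x := by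
  have hpos : 0 < 1 + exp (-(x - m) / s) := by positivity
  refine ((hasDerivAt_exp_neg_sub_div x).div ((hasDerivAt_exp_neg_sub_div x).const_add 1)
    hpos.ne').congr_deriv ?_
  unfold logisticPdf
  field_simp
  ring

lemma hasDerivAt_log_one_add_exp_neg_sub_div (x : ℝ) :
    HasDerivAt (fun x => log (1 + exp (-(x - m) / s))) (-(logisticSurvival m s x / s)) x := by
  have hpos : 0 < 1 + exp (-(x - m) / s) := by positivity
  refine (((hasDerivAt_exp_neg_sub_div x).const_add 1).log hpos.ne').congr_deriv ?_
  unfold logisticSurvival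
  ring

lemma hasDerivAt_dilog_neg_exp_neg_sub_div (x : ℝ) :
    HasDerivAt (fun x => dilog (-exp (-(x - m) / s))) (log (1 + exp (-(x - m) / s)) / s) x :=
  ((hasDerivAt_dilog_neg_exp _).comp x (hasDerivAt_neg_sub_div x)).congr_deriv (by ring)

/-- A primitive of `x ↦ x² · logisticPdf m s x`, found by integrating by parts twice:
`x² f = -(x² S)' + 2x S`, `S = -s (log (1 + E))'` and `log (1 + E) = s (dilog (-E))'`,
where `S` is the survival function and `E x = exp (-(x - m) / s)`. -/
noncomputable def logisticSqPrimitive (m s x : ℝ) : ℝ :=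
  -(x ^ 2 * logisticSurvival m s x) - 2 * s * x * log (1 + exp (-(x - m) / s))
    + 2 * s ^ 2 * dilog (-exp (-(x - m) / s))

lemma hasDerivAt_logisticSqPrimitive (hs : s ≠ 0) (x : ℝ) :
    HasDerivAt (logisticSqPrimitive m s) (x ^ 2 * logisticPdf m s x) x := by
  have hS := (hasDerivAt_pow 2 x).mul (hasDerivAt_logisticSurvival (m := m) (s := s) x)
  have hL := ((hasDerivAt_id x).const_mul (2 * s)).mul
    (hasDerivAt_log_one_add_exp_neg_sub_div (m := m) (s := s) x)
  have hD := (hasDerivAt_dilog_neg_exp_neg_sub_div (m := m) (s := s) x).const_mul (2 * s ^ 2)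
  refine ((hS.neg.sub hL).add hD).congr_deriv ?_
  field_simp
  simp only [id, Nat.cast_ofNat]
  ring

lemma logisticSqPrimitive_zero :
    logisticSqPrimitive m s 0 = 2 * s ^ 2 * dilog (-exp (m / s)) := by
  simp [logisticSqPrimitive]

lemma tendsto_pow_mul_exp_neg_sub_div_atTop (hs : 0 < s) (n : ℕ) :
    Tendsto (fun x => x ^ n * exp (-(x - m) / s)) atTop (𝓝 0) := by
  have h := (tendsto_rpow_mul_exp_neg_mul_atTop_nhds_zero n s⁻¹ (inv_pos.mpr hs)).const_mul
    (exp (m / s))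
  rw [mul_zero] at h
  refine h.congr fun x => ?_
  rw [rpow_natCast, mul_left_comm, ← exp_add]
  congr 2
  field_simp
  ring

lemma tendsto_logisticSqPrimitive_atTop (hs : 0 < s) :
    Tendsto (logisticSqPrimitive m s) atTop (𝓝 0) := by
  have hE := fun n => tendsto_pow_mul_exp_neg_sub_div_atTop (m := m) hs n
  have hsq : Tendsto (fun x => x ^ 2 * logisticSurvival m s x) atTop (𝓝 0) := by
    refine squeeze_zero (fun x => ?_) (fun x => ?_) (hE 2)
    · unfold logisticSurvival
      positivity
    · exact mul_le_mul_of_nonneg_left (logisticSurvival_le_exp x) (sq_nonneg x)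
  have hlog : Tendsto (fun x => 2 * s * x * log (1 + exp (-(x - m) / s))) atTop (𝓝 0) := by
    have hlog_le (x : ℝ) : log (1 + exp (-(x - m) / s)) ≤ exp (-(x - m) / s) := by
      linarith [log_le_sub_one_of_pos (by positivity : 0 < 1 + exp (-(x - m) / s))]
    refine squeeze_zero' ?_ ?_ (by simpa only [mul_zero] using (hE 1).const_mul (2 * s))
    · filter_upwards [eventually_ge_atTop 0] with x hx
      have : 0 ≤ log (1 + exp (-(x - m) / s)) := log_nonneg (by linarith [exp_pos (-(x - m) / s)])
      positivity
    · filter_upwards [eventually_ge_atTop 0] with x hx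
      rw [pow_one, ← mul_assoc]
      exact mul_le_mul_of_nonneg_left (hlog_le x) (by positivity)
  have hdilog : Tendsto (fun x => 2 * s ^ 2 * dilog (-exp (-(x - m) / s))) atTop (𝓝 0) := by
    refine squeeze_zero_norm (fun x => ?_)
      (by simpa only [mul_zero] using (hE 0).const_mul (2 * s ^ 2))
    have h := abs_dilog_le (neg_nonpos.mpr (exp_pos (-(x - m) / s)).le)
    rw [neg_neg] at h
    rw [norm_mul, pow_zero, one_mul, Real.norm_of_nonneg (by positivity), Real.norm_eq_abs]
    exact mul_le_mul_of_nonneg_left h (by positivity)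
  have h := (hsq.neg.sub hlog).add hdilog
  rwa [neg_zero, sub_zero, add_zero] at h

end Logistic

/-- For X logistic with mean μ and scale s: E[(max(0, X))²] = −2s²·Li₂(−e^{μ/s}). -/
theorem relu_secondMoment_logistic (μ s : ℝ) (hs : 0 < s) :
    (∫ x, (max 0 x) ^ 2 * logisticPdf μ s x)
      = -2 * s ^ 2 * dilog (-Real.exp (μ / s)) := by
  have hFTC := integral_Ioi_of_hasDerivAt_of_nonneg' (a := 0)
    (fun x _ => hasDerivAt_logisticSqPrimitive hs.ne' x)
    (fun x _ => by have := logisticPdf_pos (m := μ) hs x; positivity)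
    (tendsto_logisticSqPrimitive_atTop hs)
  rw [integral_max_zero_sq_mul, hFTC, logisticSqPrimitive_zero]
  ring
end

section
/- Let V₁,...,Vₙ be i.i.d. exponential(1) random variables and define Z_i = log(Vₙ) − log(V_i) for i = 1,...,n−1. Then Z = (Z₁,...,Z_{n−1}) has the (n−1)-variate logistic distribution with joint cdf F(z) = 1/(1 + Σ_{k=1}^{n−1} e^{−z_k}). -/
/-!
Conditionally on `V n = t`, the event is `V i ≥ t e^{-z i}` for all `i < n`, which by
independence has probability `exp (-t ∑ e^{-z i})`. Integrating over `t` gives the Laplace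
transform of `Exp(1)` at `∑ e^{-z i}`, namely `(1 + ∑ e^{-z i})⁻¹`. The logarithms are harmless
because exponential variables are almost surely positive.
-/

open MeasureTheory ProbabilityTheory Set Real

lemma Real.log_sub_log_le_iff {a b z : ℝ} (ha : 0 < a) (hb : 0 < b) :
    log a - log b ≤ z ↔ a * exp (-z) ≤ b := by
  rw [sub_le_comm, ← log_le_log_iff (by positivity) hb, log_mul ha.ne' (exp_pos _).ne', log_exp,
    sub_eq_add_neg]

namespace ProbabilityTheory

lemma expMeasure_eq_withDensity (r : ℝ) :
    expMeasure r = volume.withDensity (exponentialPDF r) := rfl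

lemma measurable_exponentialPDF (r : ℝ) : Measurable (exponentialPDF r) :=
  (measurable_exponentialPDFReal r).ennreal_ofReal

instance (r : ℝ) : NullSingletonClass (expMeasure r) :=
  inferInstanceAs (NullSingletonClass (volume.withDensity _))

instance (r : ℝ) : IsFiniteMeasure (expMeasure r) := by
  rcases lt_or_ge 0 r with hr | hr
  · have := isProbabilityMeasure_expMeasure hr
    infer_instance
  · have hpdf : exponentialPDF r = 0 := funext fun x => by
      rw [exponentialPDF_eq, Pi.zero_apply, ENNReal.ofReal_eq_zero]
      split_ifs
      · exact mul_nonpos_of_nonpos_of_nonneg hr (exp_pos _).le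
      · exact le_rfl
    rw [expMeasure_eq_withDensity, hpdf, withDensity_zero]
    infer_instance

lemma ae_pos_expMeasure (r : ℝ) : ∀ᵐ t ∂expMeasure r, 0 < t := by
  rw [expMeasure_eq_withDensity, ae_withDensity_iff (measurable_exponentialPDF r)]
  filter_upwards [Measure.ae_ne volume 0] with t ht hpdf
  exact (not_lt.1 fun h => hpdf (exponentialPDF_of_neg h)).lt_of_ne' ht

lemma expMeasure_Ici {r c : ℝ} (hr : 0 < r) (hc : 0 ≤ c) :
    expMeasure r (Ici c) = ENNReal.ofReal (exp (-(r * c))) := by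
  have := isProbabilityMeasure_expMeasure hr
  have hexp : exp (-(r * c)) ≤ 1 := exp_le_one_iff.2 (by nlinarith)
  rw [← measure_congr Ioi_ae_eq_Ici, ← compl_Iic, prob_compl_eq_one_sub measurableSet_Iic,
    ← ofReal_cdf, cdf_expMeasure_eq hr, if_pos hc, ← ENNReal.ofReal_one,
    ← ENNReal.ofReal_sub _ (by linarith), sub_sub_cancel]

lemma map_eq_expMeasure_of_cdf {Ω : Type*} [MeasurableSpace Ω] {μ : Measure Ω}
    [IsProbabilityMeasure μ] {X : Ω → ℝ} (hX : Measurable X) {r : ℝ} (hr : 0 < r)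
    (hcdf : ∀ s, μ.real {ω | X ω ≤ s} = if 0 ≤ s then 1 - exp (-(r * s)) else 0) :
    μ.map X = expMeasure r := by
  have := isProbabilityMeasure_expMeasure hr
  have := Measure.isProbabilityMeasure_map (μ := μ) hX.aemeasurable
  refine Measure.eq_of_cdf _ _ ?_
  ext s
  rw [cdf_eq_real, map_measureReal_apply hX measurableSet_Iic, cdf_expMeasure_eq hr]
  exact hcdf s

lemma lintegral_exp_neg_mul_expMeasure {r s : ℝ} (hr : 0 < r) (hs : 0 ≤ s) :
    ∫⁻ t, ENNReal.ofReal (exp (-(s * t))) ∂expMeasure r = ENNReal.ofReal (r / (r + s)) := by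
  have hrs : 0 < r + s := by linarith
  have hdens : ∀ t, exponentialPDF r t * ENNReal.ofReal (exp (-(s * t)))
      = ENNReal.ofReal (r / (r + s)) * exponentialPDF (r + s) t := by
    intro t
    rcases lt_or_ge t 0 with ht | ht
    · simp [exponentialPDF_of_neg ht]
    · rw [exponentialPDF_of_nonneg ht, exponentialPDF_of_nonneg ht,
        ← ENNReal.ofReal_mul (by positivity), ← ENNReal.ofReal_mul (by positivity)]
      congr 1
      field_simp
      rw [← exp_add]
      ring_nf
  rw [expMeasure_eq_withDensity,
    lintegral_withDensity_eq_lintegral_mul _ (measurable_exponentialPDF r) (by fun_prop)]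
  simp_rw [Pi.mul_apply, hdens]
  rw [lintegral_const_mul _ (measurable_exponentialPDF _), lintegral_exponentialPDF_eq_one hrs,
    mul_one]

lemma pi_expMeasure_setOf_mul_le {ι : Type*} [Fintype ι] {r t : ℝ} (hr : 0 < r) (ht : 0 ≤ t)
    {q : ι → ℝ} (hq : ∀ i, 0 ≤ q i) :
    Measure.pi (fun _ : ι => expMeasure r) {y | ∀ i, t * q i ≤ y i}
      = ENNReal.ofReal (exp (-((r * ∑ i, q i) * t))) := by
  have hset : {y : ι → ℝ | ∀ i, t * q i ≤ y i} = univ.pi fun i => Ici (t * q i) := by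
    ext y; simp only [mem_ofPred_eq, mem_pi, mem_univ, mem_Ici, forall_const]
  rw [hset, Measure.pi_pi]
  simp_rw [expMeasure_Ici hr (mul_nonneg ht (hq _))]
  rw [← ENNReal.ofReal_prod_of_nonneg fun _ _ => (exp_pos _).le, ← exp_sum]
  congr 2
  rw [Finset.mul_sum, Finset.sum_mul, ← Finset.sum_neg_distrib]
  congr 1 with i
  ring

lemma measurableSet_setOf_mul_le {ι : Type*} [Countable ι] (q : ι → ℝ) :
    MeasurableSet {p : ℝ × (ι → ℝ) | ∀ i, p.1 * q i ≤ p.2 i} := by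
  simp only [ofPred_forall]
  exact .iInter fun i => measurableSet_le (by fun_prop) (by fun_prop)

lemma prod_pi_expMeasure_setOf_mul_le {ι : Type*} [Fintype ι] {r : ℝ} (hr : 0 < r)
    {q : ι → ℝ} (hq : ∀ i, 0 ≤ q i) :
    (expMeasure r).prod (Measure.pi fun _ : ι => expMeasure r) {p | ∀ i, p.1 * q i ≤ p.2 i}
      = ENNReal.ofReal (1 + ∑ i, q i)⁻¹ := by
  have hsum : 0 ≤ ∑ i, q i := Finset.sum_nonneg fun i _ => hq i
  rw [Measure.prod_apply (measurableSet_setOf_mul_le q)]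
  calc ∫⁻ t, Measure.pi (fun _ : ι => expMeasure r) (Prod.mk t ⁻¹' {p | ∀ i, p.1 * q i ≤ p.2 i})
        ∂expMeasure r
      = ∫⁻ t, ENNReal.ofReal (exp (-((r * ∑ i, q i) * t))) ∂expMeasure r := by
        refine lintegral_congr_ae ?_
        filter_upwards [ae_pos_expMeasure r] with t ht
        exact pi_expMeasure_setOf_mul_le hr ht.le hq
    _ = ENNReal.ofReal (1 + ∑ i, q i)⁻¹ := by
        rw [lintegral_exp_neg_mul_expMeasure hr (by positivity)]
        congr 1
        field_simp

lemma pi_expMeasure_log_sub_log_le {n : ℕ} {r : ℝ} (hr : 0 < r) (z : Fin n → ℝ) :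
    Measure.pi (fun _ : Fin (n + 1) => expMeasure r)
        {x | ∀ i : Fin n, log (x (Fin.last n)) - log (x i.castSucc) ≤ z i}
      = ENNReal.ofReal (1 + ∑ i, exp (-z i))⁻¹ := by
  set A : Set (Fin (n + 1) → ℝ) := {x | ∀ i : Fin n, x (Fin.last n) * exp (-z i) ≤ x i.castSucc}
  have hae : {x : Fin (n + 1) → ℝ | ∀ i : Fin n, log (x (Fin.last n)) - log (x i.castSucc) ≤ z i}
      =ᵐ[Measure.pi fun _ => expMeasure r] A := by
    have hpos : ∀ᵐ x ∂Measure.pi (fun _ : Fin (n + 1) => expMeasure r), ∀ j, 0 < x j :=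
      ae_all_iff.2 fun j => Measure.tendsto_eval_ae_ae.eventually (ae_pos_expMeasure r)
    filter_upwards [hpos] with x hx
    simp only [eq_iff_iff]
    exact forall_congr' fun i => log_sub_log_le_iff (hx _) (hx _)
  have hA : (MeasurableEquiv.piFinSuccAbove (fun _ => ℝ) (Fin.last n)) ⁻¹'
      {p : ℝ × (Fin n → ℝ) | ∀ i, p.1 * exp (-z i) ≤ p.2 i} = A := by
    ext x
    simp [A, MeasurableEquiv.piFinSuccAbove_apply, Fin.init]
  rw [measure_congr hae, ← hA, (measurePreserving_piFinSuccAbove _ _).measure_preimage,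
    prod_pi_expMeasure_setOf_mul_le hr fun i => (exp_pos _).le]
  exact (measurableSet_setOf_mul_le _).nullMeasurableSet

end ProbabilityTheory

/-- If V₁, …, Vₙ are i.i.d. Exp(1) and Z_i = log Vₙ − log V_i for i < n, then
Z has the (n−1)-variate logistic distribution with joint cdf
F(z) = 1/(1 + Σ_k e^{−z_k}). -/
theorem log_ratio_exponentials_multivariate_logistic
    {Ω : Type*} [MeasurableSpace Ω] (μ : Measure Ω) [IsProbabilityMeasure μ]
    (n : ℕ) (V : Fin (n + 1) → Ω → ℝ) (hV : ∀ i, Measurable (V i))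
    (hindep : iIndepFun (m := fun _ => Real.measurableSpace) V μ)
    (hcdf : ∀ i, ∀ s : ℝ, (μ {ω | V i ω ≤ s}).toReal
      = if 0 ≤ s then 1 - Real.exp (-s) else 0) :
    ∀ z : Fin n → ℝ,
      (μ {ω | ∀ i : Fin n,
          Real.log (V (Fin.last n) ω) - Real.log (V i.castSucc ω) ≤ z i}).toReal
        = (1 + ∑ i : Fin n, Real.exp (-z i))⁻¹ := by
  intro z
  have hlaw : μ.map (fun ω i => V i ω) = Measure.pi fun _ => expMeasure 1 := by
    rw [hindep.map_fun_eq_pi_map fun i => (hV i).aemeasurable]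
    congr with i : 1
    exact map_eq_expMeasure_of_cdf (hV i) one_pos fun s => by
      rw [one_mul]; exact hcdf i s
  have hevent : MeasurableSet
      {x : Fin (n + 1) → ℝ | ∀ i : Fin n, log (x (Fin.last n)) - log (x i.castSucc) ≤ z i} := by
    simp only [ofPred_forall]
    exact .iInter fun i => measurableSet_le (by fun_prop) measurable_const
  have hpre : μ {ω | ∀ i : Fin n, log (V (Fin.last n) ω) - log (V i.castSucc ω) ≤ z i}
      = μ.map (fun ω i => V i ω)
          {x | ∀ i : Fin n, log (x (Fin.last n)) - log (x i.castSucc) ≤ z i} := by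
    rw [Measure.map_apply (by fun_prop) hevent]
    rfl
  rw [hpre, hlaw, pi_expMeasure_log_sub_log_le one_pos, ENNReal.toReal_ofReal (by positivity)]
end
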